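/- arXiv:1205.0923 — 5 statements merged into one kernel-verified Lean document; each statement's English description precedes it below -/
import Mathlib

section
/- Let F : U → U be a p-periodic C¹-diffeomorphism of an open set U ⊆ 𝕂^k with fixed point x₀. Then the map ψ(x) = (1/p) ∑_{i=0}^{p-1} (DF(x₀))^{-i}(F^i(x)) satisfies ψ ∘ F = L ∘ ψ near x₀, where L(x) = DF(x₀)·x, and Dψ(x₀) = Id, so ψ is a local diffeomorphism linearizing F near x₀ (Montgomery–Bochner theorem, smooth fixed-point version). -/
/-!
Write `A = DF(x₀)`. Since `F^[p] = id` near the fixed point, the chain rule gives `A ^ p = 1`,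
so `A` is invertible with `A⁻¹ ^ p = 1`. Replacing `x` by `F(x)` turns the orbit sum
`∑ A⁻ⁱ Fⁱ(x)` into `A` applied to the same sum with the index shifted by one; because
`Fᵖ(x) = x` and `A⁻ᵖ = 1`, that shift is a cyclic relabelling, hence `ψ ∘ F = A ∘ ψ`.
By the chain rule each term `A⁻ⁱ ∘ Fⁱ` has derivative `A⁻ⁱ Aⁱ = 1` at `x₀`, so the average
has derivative the identity.
-/

open Finset Filter Topology

section Averaging

variable {G M : Type*} [Monoid G] [AddCommMonoid M] [DistribMulAction G M]

theorem sum_range_add_one_eq_sum_range_of_eq {f : ℕ → M} {n : ℕ} (h : f n = f 0) :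
    ∑ i ∈ range n, f (i + 1) = ∑ i ∈ range n, f i := by
  cases n with
  | zero => simp
  | succ n => rw [sum_range_succ, h, sum_range_succ']

theorem sum_pow_smul_iterate_apply_self {a b : G} (hab : a * b = 1) {p : ℕ} (hb : b ^ p = 1)
    (f : M → M) {x : M} (hx : f^[p] x = x) :
    ∑ i ∈ range p, b ^ i • f^[i] (f x) = a • ∑ i ∈ range p, b ^ i • f^[i] x := by
  have hstep : ∀ i, b ^ i • f^[i] (f x) = a • (b ^ (i + 1) • f^[i + 1] x) := fun i => by
    rw [smul_smul, pow_succ', ← mul_assoc, hab, one_mul, Function.iterate_succ_apply]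
  rw [sum_congr rfl fun i _ => hstep i, ← smul_sum,
    sum_range_add_one_eq_sum_range_of_eq (f := fun i => b ^ i • f^[i] x) (by simp [hb, hx])]

end Averaging

section Derivative

variable {𝕜 E : Type*} [NontriviallyNormedField 𝕜] [NormedAddCommGroup E] [NormedSpace 𝕜 E]
  {f : E → E} {A : E →L[𝕜] E} {x₀ : E}

theorem HasFDerivAt.pow_eq_one_of_iterate_eventuallyEq_id (hf : HasFDerivAt f A x₀)
    (hx₀ : f x₀ = x₀) {p : ℕ} (hper : f^[p] =ᶠ[𝓝 x₀] id) : A ^ p = 1 :=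
  (hf.iterate hx₀ p).unique ((hasFDerivAt_id x₀).congr_of_eventuallyEq hper)

theorem HasFDerivAt.sum_pow_apply_iterate (hf : HasFDerivAt f A x₀) (hx₀ : f x₀ = x₀)
    {B : E →L[𝕜] E} (hBA : B * A = 1) (p : ℕ) :
    HasFDerivAt (fun x => ∑ i ∈ range p, (B ^ i) (f^[i] x)) (p • (1 : E →L[𝕜] E)) x₀ := by
  have hterm : ∀ i ∈ range p, HasFDerivAt (fun x => (B ^ i) (f^[i] x)) 1 x₀ := fun i _ => by
    have := (B ^ i).hasFDerivAt.comp x₀ (hf.iterate hx₀ i)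
    rwa [← ContinuousLinearMap.mul_def, pow_mul_pow_eq_one i hBA] at this
  simpa using HasFDerivAt.fun_sum hterm

end Derivative

theorem stmt_1_general {𝕜 : Type} [RCLike 𝕜] {k : ℕ} {U : Set (Fin k → 𝕜)}
    (hU : IsOpen U) (F : (Fin k → 𝕜) → (Fin k → 𝕜))
    (hC1 : ContDiffOn 𝕜 1 F U)
    (x₀ : Fin k → 𝕜) (hx₀ : x₀ ∈ U) (hfix : F x₀ = x₀)
    (p : ℕ) (hp : 0 < p) (hper : ∀ x ∈ U, F^[p] x = x)
    (ψ : (Fin k → 𝕜) → (Fin k → 𝕜))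
    (hψ : ∀ x, ψ x = (p : 𝕜)⁻¹ •
      ∑ i ∈ Finset.range p, (Ring.inverse (fderiv 𝕜 F x₀) ^ i) (F^[i] x)) :
    (∀ᶠ x in nhds x₀, ψ (F x) = fderiv 𝕜 F x₀ (ψ x)) ∧
      fderiv 𝕜 ψ x₀ = ContinuousLinearMap.id 𝕜 (Fin k → 𝕜) := by
  set A := fderiv 𝕜 F x₀
  have hU₀ : U ∈ 𝓝 x₀ := hU.mem_nhds hx₀
  have hF : HasFDerivAt F A x₀ :=
    ((hC1.contDiffAt hU₀).differentiableAt one_ne_zero).hasFDerivAt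
  have hAp : A ^ p = 1 :=
    hF.pow_eq_one_of_iterate_eventuallyEq_id hfix (eventually_of_mem hU₀ hper)
  have hA : IsUnit A := IsUnit.of_pow_eq_one hAp hp.ne'
  have hBp : Ring.inverse A ^ p = 1 := by rw [Ring.inverse_pow, hAp, Ring.inverse_one]
  constructor
  · filter_upwards [hU₀] with x hx
    simp only [hψ, map_smul, ← ContinuousLinearMap.smul_def]
    rw [sum_pow_smul_iterate_apply_self (Ring.mul_inverse_cancel A hA) hBp F (hper x hx)]
  · have hψ' : HasFDerivAt ψ ((p : 𝕜)⁻¹ • p • (1 : (Fin k → 𝕜) →L[𝕜] (Fin k → 𝕜))) x₀ := by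
      rw [funext hψ]
      exact (hF.sum_pow_apply_iterate hfix (Ring.inverse_mul_cancel A hA) p).const_smul (p : 𝕜)⁻¹
    rw [hψ'.fderiv, ← Nat.cast_smul_eq_nsmul 𝕜, smul_smul,
      inv_mul_cancel₀ (by exact_mod_cast hp.ne'), one_smul, ContinuousLinearMap.one_def]

/-- Montgomery–Bochner theorem (smooth fixed-point version): if `F` is a
`p`-periodic `C¹` diffeomorphism of an open set `U` with fixed point `x₀`,
then `ψ(x) = (1/p) ∑_{i<p} (DF(x₀))⁻ⁱ (Fⁱ(x))` conjugates `F` to its linear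
part near `x₀`, and `Dψ(x₀) = Id`, so `ψ` is a local diffeomorphism
linearizing `F` near `x₀`. -/
theorem stmt_1 {𝕜 : Type} [RCLike 𝕜] {k : ℕ} {U : Set (Fin k → 𝕜)}
    (hU : IsOpen U) (F Finv : (Fin k → 𝕜) → (Fin k → 𝕜))
    (hmaps : Set.MapsTo F U U) (hC1 : ContDiffOn 𝕜 1 F U)
    (hinvmaps : Set.MapsTo Finv U U) (hinvC1 : ContDiffOn 𝕜 1 Finv U)
    (hinv : ∀ x ∈ U, Finv (F x) = x ∧ F (Finv x) = x)
    (x₀ : Fin k → 𝕜) (hx₀ : x₀ ∈ U) (hfix : F x₀ = x₀)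
    (p : ℕ) (hp : 0 < p) (hper : ∀ x ∈ U, F^[p] x = x)
    (ψ : (Fin k → 𝕜) → (Fin k → 𝕜))
    (hψ : ∀ x, ψ x = (p : 𝕜)⁻¹ •
      ∑ i ∈ Finset.range p, (Ring.inverse (fderiv 𝕜 F x₀) ^ i) (F^[i] x)) :
    (∀ᶠ x in nhds x₀, ψ (F x) = fderiv 𝕜 F x₀ (ψ x)) ∧
      fderiv 𝕜 ψ x₀ = ContinuousLinearMap.id 𝕜 (Fin k → 𝕜) :=
  stmt_1_general hU F hC1 x₀ hx₀ hfix p hp hper ψ hψ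
end

section
/- Let F_a(x) = Lx + G(x,a) be a smooth family of maps on 𝕂^n with parameters a ∈ 𝕂^m, where G(0,a) = 0 and D_xG(0,a) = 0 for all a. If p is the minimal positive integer with L^p = Id, then whenever F_a is periodic for some parameter a, it is p-periodic, i.e. F_a^p = Id. -/
open Filter Topology Finset

open Filter Topology Finset

private lemma contDiff_iterate {𝕜 : Type} [RCLike 𝕜] {E : Type} [NormedAddCommGroup E]
    [NormedSpace 𝕜 E] {H : E → E} (hH : ContDiff 𝕜 (⊤ : ℕ∞) H) (j : ℕ) : ContDiff 𝕜 (⊤ : ℕ∞) H^[j] := by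
  induction j with
  | zero => simpa using contDiff_id
  | succ j ih => rw [Function.iterate_succ]; exact ih.comp hH

/-- Bochner-type local rigidity: a smooth finite-order map fixing `c` with identity
derivative at `c` is the identity near `c`. -/
private lemma local_id {𝕜 : Type} [RCLike 𝕜] {E : Type} [NormedAddCommGroup E]
    [NormedSpace 𝕜 E] [CompleteSpace E] {H : E → E} (hH : ContDiff 𝕜 (⊤ : ℕ∞) H)
    {k : ℕ} (hk : 0 < k) (hHk : ∀ x, H^[k] x = x)
    {c : E} (hc : H c = c) (hd : HasFDerivAt H (1 : E →L[𝕜] E) c) :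
    ∀ᶠ x in 𝓝 c, H x = x := by
  set φ : E → E := fun x => (k : 𝕜)⁻¹ • ∑ j ∈ Finset.range k, H^[j] x with hφdef
  have hφH : ∀ x, φ (H x) = φ x := by
    intro x
    simp only [hφdef]
    congr 1
    have h1 : ∀ j, H^[j] (H x) = H^[j + 1] x := fun j => (Function.iterate_succ_apply H j x).symm
    calc ∑ j ∈ Finset.range k, H^[j] (H x) = ∑ j ∈ Finset.range k, H^[j+1] x := by
          simp only [h1]
      _ = ∑ j ∈ Finset.range (k+1), H^[j] x - H^[0] x := by
          rw [Finset.sum_range_succ']; abel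
      _ = ∑ j ∈ Finset.range k, H^[j] x := by
          rw [Finset.sum_range_succ, hHk x]
          simp
  -- φ is smooth
  have hφs : ContDiff 𝕜 (⊤ : ℕ∞) φ :=
    (ContDiff.sum fun j _ => contDiff_iterate hH j).const_smul _
  -- derivative of φ at c is the identity
  have hder : ∀ j : ℕ, HasFDerivAt H^[j] (1 : E →L[𝕜] E) c := by
    intro j
    simpa using hd.iterate hc j
  have hφd : HasFDerivAt φ (1 : E →L[𝕜] E) c := by
    have hsum : HasFDerivAt (fun x => ∑ j ∈ Finset.range k, H^[j] x)
        (∑ _j ∈ Finset.range k, (1 : E →L[𝕜] E)) c :=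
      HasFDerivAt.fun_sum fun j _ => hder j
    have := hsum.fun_const_smul ((k : 𝕜)⁻¹)
    convert this using 1
    rw [Finset.sum_const, Finset.card_range, ← Nat.cast_smul_eq_nsmul 𝕜, smul_smul,
      inv_mul_cancel₀ (by exact_mod_cast hk.ne' : (k : 𝕜) ≠ 0), one_smul]
  have hφstrict : HasStrictFDerivAt φ
      ((ContinuousLinearEquiv.refl 𝕜 E : E ≃L[𝕜] E) : E →L[𝕜] E) c :=
    hφs.contDiffAt.hasStrictFDerivAt' (by exact hφd) (by simp)
  have hinv : ∀ᶠ x in 𝓝 c,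
      hφstrict.localInverse φ _ c (φ x) = x := hφstrict.eventually_left_inverse
  have hHc : Tendsto H (𝓝 c) (𝓝 c) := by
    simpa [hc] using (hH.continuous.continuousAt (x := c)).tendsto
  filter_upwards [hinv, hHc.eventually hinv] with x h1 h2
  rw [hφH x, h1] at h2
  exact h2.symm

/-- A smooth finite-order map with a fixed point where the derivative is the identity
is the identity everywhere. -/
private lemma global_id {𝕜 : Type} [RCLike 𝕜] {n : ℕ} {H : (Fin n → 𝕜) → (Fin n → 𝕜)}
    (hH : ContDiff 𝕜 (⊤ : ℕ∞) H) {k : ℕ} (hk : 0 < k) (hHk : ∀ x, H^[k] x = x)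
    (hc : H 0 = 0) (hd : HasFDerivAt H (1 : (Fin n → 𝕜) →L[𝕜] (Fin n → 𝕜)) 0) :
    ∀ x, H x = x := by
  set S : Set (Fin n → 𝕜) := {x | ∀ᶠ y in 𝓝 x, H y = y} with hS
  have hSopen : IsOpen S := isOpen_setOf_eventually_nhds
  have h0S : (0 : Fin n → 𝕜) ∈ S := local_id hH hk hHk hc hd
  have hSfix : ∀ y ∈ S, H y = y := fun y hy => hy.self_of_nhds
  have hSder : ∀ y ∈ S, fderiv 𝕜 H y = (1 : (Fin n → 𝕜) →L[𝕜] (Fin n → 𝕜)) := by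
    intro y hy
    have : fderiv 𝕜 H y = fderiv 𝕜 (id : (Fin n → 𝕜) → (Fin n → 𝕜)) y :=
      Filter.EventuallyEq.fderiv_eq (by filter_upwards [hy] with z hz using hz)
    rw [this, fderiv_id]
    rfl
  have hSclosed : IsClosed S := by
    rw [← closure_eq_iff_isClosed]
    refine Set.Subset.antisymm ?_ subset_closure
    intro x hx
    have hfix : H x = x := by
      have hcl : closure S ⊆ {y | H y = y} :=
        closure_minimal hSfix (isClosed_eq hH.continuous continuous_id)
      exact hcl hx
    have hder : fderiv 𝕜 H x = (1 : (Fin n → 𝕜) →L[𝕜] (Fin n → 𝕜)) := by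
      have hcl : closure S ⊆ {y | fderiv 𝕜 H y = (1 : (Fin n → 𝕜) →L[𝕜] (Fin n → 𝕜))} :=
        closure_minimal hSder (isClosed_eq (hH.continuous_fderiv (by simp)) continuous_const)
      exact hcl hx
    have hdx : HasFDerivAt H (1 : (Fin n → 𝕜) →L[𝕜] (Fin n → 𝕜)) x := by
      have := ((hH.differentiable (by simp)) x).hasFDerivAt
      rwa [hder] at this
    exact local_id hH hk hHk hfix hdx
  have : S = Set.univ := IsClopen.eq_univ ⟨hSclosed, hSopen⟩ ⟨0, h0S⟩
  intro x
  exact hSfix x (this ▸ Set.mem_univ x)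

/-- For a smooth family `F_a(x) = Lx + G(x,a)` with `G(0,a) = 0` and
`D_x G(0,a) = 0`, if `p` is minimal with `L^p = Id`, then any periodic member
of the family is `p`-periodic. -/
theorem stmt_3 {𝕜 : Type} [RCLike 𝕜] {n m : ℕ}
    (L : (Fin n → 𝕜) →L[𝕜] (Fin n → 𝕜))
    (G : (Fin n → 𝕜) → (Fin m → 𝕜) → (Fin n → 𝕜))
    (hsmooth : ContDiff 𝕜 (⊤ : ℕ∞) (fun q : (Fin n → 𝕜) × (Fin m → 𝕜) => G q.1 q.2))
    (hG0 : ∀ a, G 0 a = 0)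
    (hGd : ∀ a, fderiv 𝕜 (fun x => G x a) 0 = 0)
    (p : ℕ) (hp : IsLeast {q : ℕ | 0 < q ∧ L ^ q = 1} p)
    (a : Fin m → 𝕜)
    (hper : ∃ q : ℕ, 0 < q ∧ ∀ x, (fun x => L x + G x a)^[q] x = x) :
    ∀ x, (fun x => L x + G x a)^[p] x = x := by
  set F : (Fin n → 𝕜) → (Fin n → 𝕜) := fun x => L x + G x a with hFdef
  obtain ⟨q, hq0, hq⟩ := hper
  obtain ⟨⟨hp0, hLp⟩, hpmin⟩ := hp
  -- smoothness of F
  have hGa : ContDiff 𝕜 (⊤ : ℕ∞) (fun x : Fin n → 𝕜 => G x a) :=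
    hsmooth.comp (contDiff_id.prodMk contDiff_const)
  have hFs : ContDiff 𝕜 (⊤ : ℕ∞) F := L.contDiff.add hGa
  have hF0 : F 0 = 0 := by simp [hFdef, hG0 a]
  -- derivative of F at 0 is L
  have hFd : HasFDerivAt F L 0 := by
    have h1 : HasFDerivAt (fun x : Fin n → 𝕜 => G x a)
        (0 : (Fin n → 𝕜) →L[𝕜] (Fin n → 𝕜)) 0 := by
      have := ((hGa.differentiable (by simp)) 0).hasFDerivAt
      rwa [hGd a] at this
    simpa [hFdef] using (L.hasFDerivAt (x := (0 : Fin n → 𝕜))).add h1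
  -- L ^ q = 1
  have hLq : L ^ q = 1 := by
    have hiter : HasFDerivAt F^[q] (L ^ q) 0 := hFd.iterate hF0 q
    have hid : HasFDerivAt F^[q] (1 : (Fin n → 𝕜) →L[𝕜] (Fin n → 𝕜)) 0 := by
      have : HasFDerivAt (id : (Fin n → 𝕜) → (Fin n → 𝕜)) (1 : (Fin n → 𝕜) →L[𝕜] (Fin n → 𝕜)) 0 :=
        hasFDerivAt_id (0 : Fin n → 𝕜)
      exact this.congr_of_eventuallyEq (Filter.Eventually.of_forall fun x => show F^[q] x = id x from hq x)
    exact hiter.unique hid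
  -- p divides q
  have hpq : p ∣ q := by
    rcases Nat.eq_zero_or_pos (q % p) with h | h
    · exact Nat.dvd_of_mod_eq_zero h
    · exfalso
      have hLr : L ^ (q % p) = 1 := by
        conv_lhs => rw [← one_mul (L ^ (q % p)), ← one_pow (q / p), ← hLp, ← pow_mul,
          ← pow_add, Nat.div_add_mod]
        exact hLq
      have := hpmin ⟨h, hLr⟩
      exact absurd (Nat.mod_lt q hp0) (not_lt.mpr this)
  -- set up H = F^[p]
  set H : (Fin n → 𝕜) → (Fin n → 𝕜) := F^[p] with hHdef
  set k : ℕ := q / p with hkdef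
  have hk0 : 0 < k := Nat.div_pos (Nat.le_of_dvd hq0 hpq) hp0
  have hHk : ∀ x, H^[k] x = x := by
    intro x
    rw [hHdef, ← Function.iterate_mul, Nat.mul_div_cancel' hpq]
    exact hq x
  have hHs : ContDiff 𝕜 (⊤ : ℕ∞) H := contDiff_iterate hFs p
  have hH0 : H 0 = 0 := Function.iterate_fixed hF0 p
  have hHd : HasFDerivAt H (1 : (Fin n → 𝕜) →L[𝕜] (Fin n → 𝕜)) 0 := by
    have := hFd.iterate hF0 p
    rwa [hLp] at this
  exact global_id hHs hk0 hHk hH0 hHd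
end

section
/- Let α be a primitive p-th root of unity and F(x,y) = (αx + f(y), y/α) a C¹ map on 𝕂² with f(0) = f'(0) = 0. Then F is periodic if and only if ∑_{j=0}^{p-1} α^j f(α^j y) ≡ 0 for all y, and in that case F is exactly p-periodic. -/
/-!
Writing the second coordinate as `α ^ n * t`, the `n`-th iterate of `F` is
`(α ^ n * x + ∑ i < n, α ^ i * f (α ^ (i + 1) * t), t)`. So every period of `F` is a multiple of
the order `p` of `α`, and `F^[p]` is the shear `(x, t) ↦ (x + α⁻¹ * S t, t)` with
`S t = ∑ j < p, α ^ j * f (α ^ j * t)`. Its iterates are `(x + m * α⁻¹ * S t, t)`, which in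
characteristic zero return to the identity for some `m > 0` only if `S ≡ 0`.
-/

open Finset

theorem Finset.sum_range_shift_of_eq {M : Type*} [AddCancelCommMonoid M] (g : ℕ → M)
    (n : ℕ) (hg : g n = g 0) : ∑ i ∈ range n, g (i + 1) = ∑ i ∈ range n, g i := by
  have h := (sum_range_succ' g n).symm
  rwa [sum_range_succ, hg, add_left_inj] at h

section TriangularMap

variable {K : Type*} [Field K] (α : K) (f : K → K)

def triangularMap : K × K → K × K := fun w => (α * w.1 + f w.2, w.2 / α)

variable {α}

theorem triangularMap_iterate_apply (hα : α ≠ 0) (n : ℕ) (x t : K) :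
    (triangularMap α f)^[n] (x, α ^ n * t) =
      (α ^ n * x + ∑ i ∈ range n, α ^ i * f (α ^ (i + 1) * t), t) := by
  induction n generalizing t with
  | zero => simp
  | succ n ih =>
    rw [Function.iterate_succ_apply', pow_succ, mul_assoc, ih]
    simp only [triangularMap, sum_range_succ' _ n, mul_div_cancel_left₀ _ hα, Prod.mk.injEq,
      and_true]
    simp only [mul_add, mul_sum, pow_succ]
    ring_nf

theorem triangularMap_iterate_of_pow_eq_one (hα : α ≠ 0) {p : ℕ} (hαp : α ^ p = 1) (x t : K) :
    (triangularMap α f)^[p] (x, t) =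
      (x + α⁻¹ * ∑ j ∈ range p, α ^ j * f (α ^ j * t), t) := by
  have hshift : α * ∑ i ∈ range p, α ^ i * f (α ^ (i + 1) * t) =
      ∑ j ∈ range p, α ^ j * f (α ^ j * t) := by
    rw [mul_sum]
    simp_rw [← mul_assoc, ← pow_succ']
    exact sum_range_shift_of_eq (fun j => α ^ j * f (α ^ j * t)) p (by simp [hαp])
  conv_lhs => rw [← one_mul t, ← hαp]
  rw [triangularMap_iterate_apply f hα, hαp, one_mul, ← hshift, inv_mul_cancel_left₀ hα]

theorem triangularMap_iterate_mul (hα : α ≠ 0) {p : ℕ} (hαp : α ^ p = 1) (m : ℕ) (x t : K) :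
    (triangularMap α f)^[p * m] (x, t) =
      (x + m * (α⁻¹ * ∑ j ∈ range p, α ^ j * f (α ^ j * t)), t) := by
  induction m generalizing x with
  | zero => simp
  | succ m ih =>
    rw [Nat.mul_succ, Function.iterate_add_apply, triangularMap_iterate_of_pow_eq_one f hα hαp, ih]
    push_cast
    ring_nf

theorem pow_eq_one_of_iterate_triangularMap {q : ℕ} (hα : α ≠ 0)
    (hq : ∀ z, (triangularMap α f)^[q] z = z) : α ^ q = 1 := by
  have h := congrArg Prod.snd (hq (0, α ^ q * 1))
  rw [triangularMap_iterate_apply f hα] at h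
  simpa using h.symm

theorem sum_eq_zero_of_iterate_triangularMap [CharZero K] (hα : α ≠ 0) {p q : ℕ}
    (hαp : α ^ p = 1) (hq : 0 < q) (hpq : p ∣ q) (hF : ∀ z, (triangularMap α f)^[q] z = z)
    (t : K) : ∑ j ∈ range p, α ^ j * f (α ^ j * t) = 0 := by
  obtain ⟨m, rfl⟩ := hpq
  have hm : (m : K) ≠ 0 := Nat.cast_ne_zero.mpr (right_ne_zero_of_mul hq.ne')
  have h := congrArg Prod.fst (hF (0, t))
  rw [triangularMap_iterate_mul f hα hαp] at h
  simpa [hm, hα] using h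

end TriangularMap

theorem stmt_6_general {𝕂 : Type} [RCLike 𝕂] (α : 𝕂) (p : ℕ) (hp : 0 < p)
    (hα : α ^ p = 1) (hprim : ∀ q : ℕ, 0 < q → q < p → α ^ q ≠ 1)
    (f : 𝕂 → 𝕂) :
    ((∃ q : ℕ, 0 < q ∧
        ∀ z : 𝕂 × 𝕂, (fun w : 𝕂 × 𝕂 => (α * w.1 + f w.2, w.2 / α))^[q] z = z) ↔
      ∀ y : 𝕂, ∑ j ∈ Finset.range p, α ^ j * f (α ^ j * y) = 0) ∧
    ((∀ y : 𝕂, ∑ j ∈ Finset.range p, α ^ j * f (α ^ j * y) = 0) →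
      (∀ z : 𝕂 × 𝕂, (fun w : 𝕂 × 𝕂 => (α * w.1 + f w.2, w.2 / α))^[p] z = z) ∧
      ∀ q : ℕ, 0 < q →
        (∀ z : 𝕂 × 𝕂, (fun w : 𝕂 × 𝕂 => (α * w.1 + f w.2, w.2 / α))^[q] z = z) →
        p ≤ q) := by
  change ((∃ q, 0 < q ∧ ∀ z, (triangularMap α f)^[q] z = z) ↔ _) ∧
    (_ → (∀ z, (triangularMap α f)^[p] z = z) ∧
      ∀ q, 0 < q → (∀ z, (triangularMap α f)^[q] z = z) → p ≤ q)
  have hprim' : IsPrimitiveRoot α p := .mk_of_lt α hp hα hprim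
  have hα0 : α ≠ 0 := hprim'.ne_zero hp.ne'
  have hdvd : ∀ q, (∀ z, (triangularMap α f)^[q] z = z) → p ∣ q := fun q hq =>
    hprim'.dvd_of_pow_eq_one q (pow_eq_one_of_iterate_triangularMap f hα0 hq)
  have hperiodic : (∀ y, ∑ j ∈ range p, α ^ j * f (α ^ j * y) = 0) →
      ∀ z, (triangularMap α f)^[p] z = z := fun hsum z => by
    simp [triangularMap_iterate_of_pow_eq_one f hα0 hα, hsum]
  refine ⟨⟨fun ⟨q, hq, hF⟩ => sum_eq_zero_of_iterate_triangularMap f hα0 hα hq (hdvd q hF) hF,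
    fun hsum => ⟨p, hp, hperiodic hsum⟩⟩,
    fun hsum => ⟨hperiodic hsum, fun q hq hF => Nat.le_of_dvd hq (hdvd q hF)⟩⟩

/-- Let `α` be a primitive `p`-th root of unity and
`F(x,y) = (αx + f(y), y/α)` a `C¹` map with `f(0) = f'(0) = 0`. Then `F` is
periodic iff `∑_{j<p} αʲ f(αʲ y) ≡ 0`, and in that case `F` is exactly
`p`-periodic. -/
theorem stmt_6 {𝕂 : Type} [RCLike 𝕂] (α : 𝕂) (p : ℕ) (hp : 0 < p)
    (hα : α ^ p = 1) (hprim : ∀ q : ℕ, 0 < q → q < p → α ^ q ≠ 1)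
    (f : 𝕂 → 𝕂) (hf : ContDiff 𝕂 1 f) (hf0 : f 0 = 0) (hf1 : deriv f 0 = 0) :
    ((∃ q : ℕ, 0 < q ∧
        ∀ z : 𝕂 × 𝕂, (fun w : 𝕂 × 𝕂 => (α * w.1 + f w.2, w.2 / α))^[q] z = z) ↔
      ∀ y : 𝕂, ∑ j ∈ Finset.range p, α ^ j * f (α ^ j * y) = 0) ∧
    ((∀ y : 𝕂, ∑ j ∈ Finset.range p, α ^ j * f (α ^ j * y) = 0) →
      (∀ z : 𝕂 × 𝕂, (fun w : 𝕂 × 𝕂 => (α * w.1 + f w.2, w.2 / α))^[p] z = z) ∧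
      ∀ q : ℕ, 0 < q →
        (∀ z : 𝕂 × 𝕂, (fun w : 𝕂 × 𝕂 => (α * w.1 + f w.2, w.2 / α))^[q] z = z) →
        p ≤ q) :=
  stmt_6_general α p hp hα hprim f
end

section
/- All eight roots of the polynomial P₈(α) = 30α⁸ + 36α⁷ + 133α⁶ + 114α⁵ + 214α⁴ + 114α³ + 133α² + 36α + 30 have modulus different from 1; in particular P₈ has no root that is a root of unity. -/
/-!
`P₈` is palindromic, so `P₈(α) = α⁴ Q(α + α⁻¹)` for the quartic
`Q(t) = 30t⁴ + 36t³ + 13t² + 6t + 8`. On the unit circle `α⁻¹ = ᾱ`, so `t = 2 Re α` is real,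
while `55 Q(t) = 66 (5t² + 3t)² + (11t + 15)² + 215` shows that `Q` has no real root.
-/

open ComplexConjugate

section

variable {R : Type*} [CommRing R]

def P₈ (α : R) : R :=
  30 * α ^ 8 + 36 * α ^ 7 + 133 * α ^ 6 + 114 * α ^ 5 + 214 * α ^ 4 +
    114 * α ^ 3 + 133 * α ^ 2 + 36 * α + 30

def Q₈ (t : R) : R :=
  30 * t ^ 4 + 36 * t ^ 3 + 13 * t ^ 2 + 6 * t + 8

theorem P₈_eq_pow_four_mul_Q₈ {α β : R} (h : α * β = 1) :
    P₈ α = α ^ 4 * Q₈ (α + β) := by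
  unfold P₈ Q₈
  linear_combination (-(120 * α ^ 6 + 180 * α ^ 5 * β + 108 * α ^ 5 + 120 * α ^ 4 * β ^ 2
    + 108 * α ^ 4 * β + 206 * α ^ 4 + 30 * α ^ 3 * β ^ 3 + 36 * α ^ 3 * β ^ 2
    + 133 * α ^ 3 * β + 114 * α ^ 3 + 30 * α ^ 2 * β ^ 2 + 36 * α ^ 2 * β + 133 * α ^ 2
    + 30 * α * β + 36 * α + 30)) * h

theorem Q₈_pos [LinearOrder R] [IsStrictOrderedRing R] (t : R) :
    0 < Q₈ t := by
  have hsos : 55 * Q₈ t = 66 * (5 * t ^ 2 + 3 * t) ^ 2 + (11 * t + 15) ^ 2 + 215 := by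
    unfold Q₈; ring
  have : 0 < 55 * Q₈ t := by rw [hsos]; positivity
  exact pos_of_mul_pos_right this (by norm_num)

end

theorem P₈_ne_zero_of_norm_eq_one {α : ℂ} (hα : ‖α‖ = 1) : P₈ α ≠ 0 := by
  have hconj : α * conj α = 1 := by rw [Complex.mul_conj', hα]; norm_num
  have hα0 : α ≠ 0 := by rintro rfl; simp at hα
  rw [P₈_eq_pow_four_mul_Q₈ hconj, Complex.add_conj]
  refine mul_ne_zero (pow_ne_zero 4 hα0) ?_
  have hQ : Q₈ ((2 * α.re : ℝ) : ℂ) = (Q₈ (2 * α.re) : ℝ) := by unfold Q₈; push_cast; ring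
  rw [hQ, Complex.ofReal_ne_zero]
  exact (Q₈_pos _).ne'

/-- All roots of `P₈(α) = 30α⁸+36α⁷+133α⁶+114α⁵+214α⁴+114α³+133α²+36α+30`
have modulus different from 1; in particular no root of `P₈` is a root of
unity. -/
theorem stmt_16 :
    (∀ α : ℂ,
      30 * α ^ 8 + 36 * α ^ 7 + 133 * α ^ 6 + 114 * α ^ 5 + 214 * α ^ 4 +
          114 * α ^ 3 + 133 * α ^ 2 + 36 * α + 30 = 0 →
      ‖α‖ ≠ 1) ∧
    ∀ α : ℂ, (∃ n : ℕ, 0 < n ∧ α ^ n = 1) →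
      30 * α ^ 8 + 36 * α ^ 7 + 133 * α ^ 6 + 114 * α ^ 5 + 214 * α ^ 4 +
          114 * α ^ 3 + 133 * α ^ 2 + 36 * α + 30 ≠ 0 := by
  refine ⟨fun α hP hα => P₈_ne_zero_of_norm_eq_one hα hP, ?_⟩
  rintro α ⟨n, hn, hpow⟩
  exact P₈_ne_zero_of_norm_eq_one (Complex.norm_eq_one_of_pow_eq_one hpow hn.ne')
end

section
/- The third-order Lyness map G₁(x,y,z) = (y, z, (1 + y + z)/x) on ℂ³ (case a = 1) is 8-periodic: G₁^8 = Id wherever the iterates are defined. -/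
/-!
Over any field, the orbit of `(x, y, z)` under `G₁` runs through the windows of the sequence
`x, y, z, (1+y+z)/x, (1+x+y+z+xz)/(xy), (1+y+z)(1+x+y)/(xyz), (1+x+y+z+xz)/(yz), (1+x+y)/z, x, y, z`.
Each step `(p, q, r) ↦ (q, r, w)` of this orbit needs only `p ≠ 0` and the identity
`p w = 1 + q + r`, which is polynomial once the denominators `x`, `y`, `z` are cleared.
-/

variable {K : Type*} [Field K]

def lyness (a : K) (v : K × K × K) : K × K × K :=
  (v.2.1, v.2.2, (a + v.2.1 + v.2.2) / v.1)

@[simp]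
theorem lyness_mk (a x y z : K) : lyness a (x, y, z) = (y, z, (a + y + z) / x) :=
  rfl

theorem lyness_iterate_succ_of_mul_eq {a p q r w : K} {n : ℕ} {v : K × K × K}
    (hv : (lyness a)^[n] v = (p, q, r)) (hp : ((lyness a)^[n] v).1 ≠ 0)
    (h : p * w = a + q + r) : (lyness a)^[n + 1] v = (q, r, w) := by
  rw [hv] at hp
  rw [Function.iterate_succ_apply', hv, lyness_mk, ← h, mul_div_cancel_left₀ w hp]

theorem lyness_one_iterate_eight {v : K × K × K}
    (h : ∀ i < 8, ((lyness 1)^[i] v).1 ≠ 0) : (lyness 1)^[8] v = v := by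
  have step : ∀ n < 8, ∀ {p q r w : K}, (lyness 1)^[n] v = (p, q, r) →
      p * w = 1 + q + r → (lyness 1)^[n + 1] v = (q, r, w) :=
    fun n hn _ _ _ _ hv hw => lyness_iterate_succ_of_mul_eq hv (h n hn) hw
  obtain ⟨x, y, z⟩ := v
  have hx : x ≠ 0 := h 0 (by norm_num)
  have hy : y ≠ 0 := h 1 (by norm_num)
  have e1 : (lyness 1)^[1] (x, y, z) = (y, z, (1 + y + z) / x) :=
    step 0 (by norm_num) rfl (by field_simp)
  have hz : z ≠ 0 := by simpa [e1] using h 2 (by norm_num)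
  have e2 : (lyness 1)^[2] (x, y, z) =
      (z, (1 + y + z) / x, (1 + x + y + z + x * z) / (x * y)) :=
    step 1 (by norm_num) e1 (by field_simp; ring)
  have e3 : (lyness 1)^[3] (x, y, z) =
      ((1 + y + z) / x, (1 + x + y + z + x * z) / (x * y),
        (1 + y + z) * (1 + x + y) / (x * y * z)) :=
    step 2 (by norm_num) e2 (by field_simp; ring)
  have e4 : (lyness 1)^[4] (x, y, z) =
      ((1 + x + y + z + x * z) / (x * y), (1 + y + z) * (1 + x + y) / (x * y * z),
        (1 + x + y + z + x * z) / (y * z)) :=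
    step 3 (by norm_num) e3 (by field_simp; ring)
  have e5 : (lyness 1)^[5] (x, y, z) =
      ((1 + y + z) * (1 + x + y) / (x * y * z), (1 + x + y + z + x * z) / (y * z),
        (1 + x + y) / z) :=
    step 4 (by norm_num) e4 (by field_simp; ring)
  have e6 : (lyness 1)^[6] (x, y, z) =
      ((1 + x + y + z + x * z) / (y * z), (1 + x + y) / z, x) :=
    step 5 (by norm_num) e5 (by field_simp; ring)
  have e7 : (lyness 1)^[7] (x, y, z) = ((1 + x + y) / z, x, y) :=
    step 6 (by norm_num) e6 (by field_simp; ring)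
  exact step 7 (by norm_num) e7 (by field_simp)

/-- The third-order Lyness map `G₁(x,y,z) = (y, z, (1+y+z)/x)` on `ℂ³`
(case `a = 1`) is 8-periodic: `G₁^8 = Id` wherever the iterates are
defined. -/
theorem stmt_19 :
    ∀ w : ℂ × ℂ × ℂ,
      (∀ i : ℕ, i < 8 →
        ((fun v : ℂ × ℂ × ℂ =>
            (v.2.1, v.2.2, (1 + v.2.1 + v.2.2) / v.1))^[i] w).1 ≠ 0) →
      (fun v : ℂ × ℂ × ℂ =>
          (v.2.1, v.2.2, (1 + v.2.1 + v.2.2) / v.1))^[8] w = w :=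
  fun _ h => lyness_one_iterate_eight h
end
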